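/- arXiv:1603.05540 — 2 statements merged into one kernel-verified Lean document; each statement's English description precedes it below -/
import Mathlib

section
/- If πTx = πRx = π > 0 (where πTx = μTx/κTx, πRx = μRx/κRx), then the lower bound SAch of Theorem 2 coincides with the upper bound of Theorem 1: if 2μTx+2μRx+2π ≤ 1 then (2μTx+2μRx+1)/2 ≤ (2κTx+2κRx+1)/(2κTx+2κRx+2), and if 2μTx+2μRx+2π > 1 then the minimum of (2μTx+2μRx+1)/2 and (2κTx+2κRx+1)/(2κTx+2κRx+2) equals (2κTx+2κRx+1)/(2κTx+2κRx+2). -/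
/-- Symmetric case πTx = πRx = π > 0 (Corollary 6): the achievable bound of
Theorem 2 coincides with the converse bound of Theorem 1. -/
theorem stmt8 (κTx κRx : ℕ) (hT : 0 < κTx) (hR : 0 < κRx)
    (μTx μRx π : ℝ) (hμT : 0 ≤ μTx) (hμR : 0 ≤ μRx) (hπ : 0 < π)
    (h1 : μTx / κTx = π) (h2 : μRx / κRx = π) :
    (2 * μTx + 2 * μRx + 2 * π ≤ 1 →
      (2 * μTx + 2 * μRx + 1) / 2 ≤ (2 * (κTx : ℝ) + 2 * κRx + 1) / (2 * κTx + 2 * κRx + 2)) ∧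
    (1 < 2 * μTx + 2 * μRx + 2 * π →
      min ((2 * μTx + 2 * μRx + 1) / 2) ((2 * (κTx : ℝ) + 2 * κRx + 1) / (2 * κTx + 2 * κRx + 2))
        = (2 * (κTx : ℝ) + 2 * κRx + 1) / (2 * κTx + 2 * κRx + 2)) := by
  have hT' : (0:ℝ) < κTx := by exact_mod_cast hT
  have hR' : (0:ℝ) < κRx := by exact_mod_cast hR
  have e1 : μTx = π * κTx := by field_simp at h1; linarith
  have e2 : μRx = π * κRx := by field_simp at h2; linarith
  have hd : (0:ℝ) < 2 * κTx + 2 * κRx + 2 := by linarith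
  constructor
  · intro h
    rw [div_le_div_iff₀ (by norm_num) hd]
    nlinarith [h, e1, e2]
  · intro h
    refine min_eq_right ?_
    rw [div_le_div_iff₀ hd (by norm_num)]
    nlinarith [h, e1, e2]
end

section
/- Let κTx, κRx be positive integers and μTx, μRx > 0 with πTx = μTx/κTx and πRx = μRx/κRx. If μTx·min(1, πRx/πTx) + μRx·min(1, πTx/πRx) + min(πTx, πRx) > 1/2, then the achievable expression SAch(κ,μ) of equation (12) equals (2κTx+2κRx+1)/(2κTx+2κRx+2). -/
open scoped Classical

/-- The achievable per-user MG SAch of Theorem 2, equation (12a)–(12c), with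
πTx = μTx/κTx and πRx = μRx/κRx. -/
noncomputable def SAch (κTx κRx : ℕ) (μTx μRx : ℝ) : ℝ :=
  let πTx := μTx / (κTx : ℝ)
  let πRx := μRx / (κRx : ℝ)
  let sat := (2 * (κTx : ℝ) + 2 * κRx + 1) / (2 * κTx + 2 * κRx + 2)
  if πRx = πTx then
    if 2 * μTx + 2 * μRx + 2 * πTx ≤ 1 then (2 * μTx + 2 * μRx + 1) / 2 else sat
  else if πRx < πTx then
    if 2 * μTx + 2 * μRx + 2 * πTx ≤ 1 then (2 * μTx + 2 * μRx + 1) / 2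
    else if 1 < 2 * μTx * (πRx / πTx) + 2 * μRx + 2 * πRx then sat
    else (2 * (κTx : ℝ) + 2 * μRx + 1) / (2 * κTx + 2)
  else
    if 2 * μTx + 2 * μRx + 2 * πRx ≤ 1 then (2 * μTx + 2 * μRx + 1) / 2
    else if 1 < 2 * μTx + 2 * μRx * (πTx / πRx) + 2 * πTx then sat
    else (2 * (κRx : ℝ) + 2 * μTx + 1) / (2 * κRx + 2)

/-- Large-μ region (Corollary 5): under the stated condition the achievable
expression SAch saturates at (2κTx+2κRx+1)/(2κTx+2κRx+2). -/
theorem stmt17 (κTx κRx : ℕ) (hT : 0 < κTx) (hR : 0 < κRx)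
    (μTx μRx : ℝ) (hμT : 0 < μTx) (hμR : 0 < μRx)
    (hlarge : μTx * min 1 ((μRx / κRx) / (μTx / κTx))
        + μRx * min 1 ((μTx / κTx) / (μRx / κRx))
        + min (μTx / (κTx : ℝ)) (μRx / (κRx : ℝ)) > 1 / 2) :
    SAch κTx κRx μTx μRx = (2 * (κTx : ℝ) + 2 * κRx + 1) / (2 * κTx + 2 * κRx + 2) := by
  have hκT : (0:ℝ) < κTx := by exact_mod_cast hT
  have hκR : (0:ℝ) < κRx := by exact_mod_cast hR
  have hπT : (0:ℝ) < μTx / κTx := div_pos hμT hκT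
  have hπR : (0:ℝ) < μRx / κRx := div_pos hμR hκR
  unfold SAch
  simp only
  rcases lt_trichotomy (μRx / (κRx:ℝ)) (μTx / (κTx:ℝ)) with h | h | h
  · rw [if_neg (ne_of_lt h), if_pos h]
    have hr1 : (μRx / κRx) / (μTx / κTx) ≤ 1 := by
      rw [div_le_one hπT]; exact h.le
    have hr2 : (1:ℝ) ≤ (μTx / κTx) / (μRx / κRx) := by
      rw [le_div_iff₀ hπR]; simpa using h.le
    rw [min_eq_right hr1, min_eq_left hr2, min_eq_right h.le] at hlarge
    have h2 : 1 < 2 * μTx * ((μRx / κRx) / (μTx / κTx)) + 2 * μRx + 2 * (μRx / κRx) := by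
      nlinarith [hlarge]
    have h1 : ¬ (2 * μTx + 2 * μRx + 2 * (μTx / κTx) ≤ 1) := by
      push_neg
      have : μTx * ((μRx / κRx) / (μTx / κTx)) ≤ μTx :=
        mul_le_of_le_one_right hμT.le hr1
      nlinarith [hlarge, h.le]
    rw [if_neg h1, if_pos h2]
  · rw [if_pos h]
    have h1 : ¬ (2 * μTx + 2 * μRx + 2 * (μTx / κTx) ≤ 1) := by
      push_neg
      rw [h] at hlarge
      rw [div_self hπT.ne', min_self] at hlarge
      simp at hlarge
      nlinarith [hlarge]
    rw [if_neg h1]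
  · rw [if_neg (ne_of_gt h), if_neg (not_lt.mpr h.le)]
    have hr1 : (μTx / κTx) / (μRx / κRx) ≤ 1 := by
      rw [div_le_one hπR]; exact h.le
    have hr2 : (1:ℝ) ≤ (μRx / κRx) / (μTx / κTx) := by
      rw [le_div_iff₀ hπT]; simpa using h.le
    rw [min_eq_left hr2, min_eq_right hr1, min_eq_left h.le] at hlarge
    have h2 : 1 < 2 * μTx + 2 * μRx * ((μTx / κTx) / (μRx / κRx)) + 2 * (μTx / κTx) := by
      nlinarith [hlarge]
    have h1 : ¬ (2 * μTx + 2 * μRx + 2 * (μRx / κRx) ≤ 1) := by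
      push_neg
      have : μRx * ((μTx / κTx) / (μRx / κRx)) ≤ μRx :=
        mul_le_of_le_one_right hμR.le hr1
      nlinarith [hlarge, h.le]
    rw [if_neg h1, if_pos h2]
end
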